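/- (Third-order Taylor bound against the odd Gaussian kernel derivative) Let G : ℝ → ℝ be bounded and three times continuously differentiable with |G′′′(x)| ≤ M for all x ∈ ℝ, for some finite constant M. Then for every t ∈ ℝ and every h > 0, | ∫_ℝ G(t − h z) φ′(z) dz − h G′(t) | ≤ M h³ / 2, where φ′(z) = −z φ(z) is the derivative of the standard normal density. -/

import Mathlib

open MeasureTheory ProbabilityTheory Filter Set Topology

/-- The standard normal density φ. -/
noncomputable def gaussPdf (x : ℝ) : ℝ := (Real.sqrt (2 * Real.pi))⁻¹ * Real.exp (-(x ^ 2) / 2)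

/-- The standard normal cdf Φ. -/
noncomputable def gaussCdf (x : ℝ) : ℝ := ∫ t in Set.Iio x, gaussPdf t

/-- The probit function Φ⁻¹ (the standard normal quantile function). -/
noncomputable def probit : ℝ → ℝ := Function.invFun gaussCdf

/-- First partial derivative of a function of two real variables. -/
noncomputable def pderiv₁ (f : ℝ → ℝ → ℝ) (u v : ℝ) : ℝ := deriv (fun w => f w v) u

/-- Second partial derivative of a function of two real variables. -/
noncomputable def pderiv₂ (f : ℝ → ℝ → ℝ) (u v : ℝ) : ℝ := deriv (fun w => f u w) v

/-- The density of the probit-transformed vector: f_ST(s,t) = c(Φ(s),Φ(t))φ(s)φ(t). -/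
noncomputable def fST (c : ℝ → ℝ → ℝ) (s t : ℝ) : ℝ :=
  c (gaussCdf s) (gaussCdf t) * gaussPdf s * gaussPdf t

/-- `C` is a (bivariate) copula with density `c`. -/
structure IsCopulaWithDensity (C c : ℝ → ℝ → ℝ) : Prop where
  grounded₁ : ∀ u ∈ Set.Icc (0:ℝ) 1, C u 0 = 0
  grounded₂ : ∀ v ∈ Set.Icc (0:ℝ) 1, C 0 v = 0
  margin₁ : ∀ u ∈ Set.Icc (0:ℝ) 1, C u 1 = u
  margin₂ : ∀ v ∈ Set.Icc (0:ℝ) 1, C 1 v = v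
  twoIncr : ∀ u₁ u₂ v₁ v₂ : ℝ, u₁ ∈ Set.Icc (0:ℝ) 1 → u₂ ∈ Set.Icc (0:ℝ) 1 →
    v₁ ∈ Set.Icc (0:ℝ) 1 → v₂ ∈ Set.Icc (0:ℝ) 1 → u₁ ≤ u₂ → v₁ ≤ v₂ →
    0 ≤ C u₂ v₂ - C u₁ v₂ - C u₂ v₁ + C u₁ v₁
  density_eq : ∀ u ∈ Set.Icc (0:ℝ) 1, ∀ v ∈ Set.Icc (0:ℝ) 1,
    C u v = ∫ x in (0:ℝ)..u, ∫ y in (0:ℝ)..v, c x y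

/-- Assumption 2 of the paper. -/
structure Assumption2 (C : ℝ → ℝ → ℝ) : Prop where
  diff_u : ∀ u v : ℝ, u ∈ Set.Ioo (0:ℝ) 1 → v ∈ Set.Icc (0:ℝ) 1 →
    DifferentiableAt ℝ (fun w => C w v) u
  diff_uu : ∀ u v : ℝ, u ∈ Set.Ioo (0:ℝ) 1 → v ∈ Set.Icc (0:ℝ) 1 →
    DifferentiableAt ℝ (fun w => pderiv₁ C w v) u
  cont_u : ContinuousOn (fun p : ℝ × ℝ => pderiv₁ C p.1 p.2)
    (Set.Ioo (0:ℝ) 1 ×ˢ Set.Icc (0:ℝ) 1)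
  cont_uu : ContinuousOn (fun p : ℝ × ℝ => pderiv₁ (pderiv₁ C) p.1 p.2)
    (Set.Ioo (0:ℝ) 1 ×ˢ Set.Icc (0:ℝ) 1)
  bound_uu : ∃ K₁ : ℝ, ∀ u v : ℝ, u ∈ Set.Ioo (0:ℝ) 1 → v ∈ Set.Icc (0:ℝ) 1 →
    |pderiv₁ (pderiv₁ C) u v| ≤ K₁ / (u * (1 - u))
  diff_v : ∀ u v : ℝ, u ∈ Set.Icc (0:ℝ) 1 → v ∈ Set.Ioo (0:ℝ) 1 →
    DifferentiableAt ℝ (fun w => C u w) v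
  diff_vv : ∀ u v : ℝ, u ∈ Set.Icc (0:ℝ) 1 → v ∈ Set.Ioo (0:ℝ) 1 →
    DifferentiableAt ℝ (fun w => pderiv₂ C u w) v
  cont_v : ContinuousOn (fun p : ℝ × ℝ => pderiv₂ C p.1 p.2)
    (Set.Icc (0:ℝ) 1 ×ˢ Set.Ioo (0:ℝ) 1)
  cont_vv : ContinuousOn (fun p : ℝ × ℝ => pderiv₂ (pderiv₂ C) p.1 p.2)
    (Set.Icc (0:ℝ) 1 ×ˢ Set.Ioo (0:ℝ) 1)
  bound_vv : ∃ K₂ : ℝ, ∀ u v : ℝ, u ∈ Set.Icc (0:ℝ) 1 → v ∈ Set.Ioo (0:ℝ) 1 →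
    |pderiv₂ (pderiv₂ C) u v| ≤ K₂ / (v * (1 - v))

/-- Assumption 3 of the paper. -/
structure Assumption3 (c : ℝ → ℝ → ℝ) : Prop where
  pos : ∀ u v : ℝ, u ∈ Set.Ioo (0:ℝ) 1 → v ∈ Set.Ioo (0:ℝ) 1 → 0 < c u v
  smooth : ContDiffOn ℝ 2 (fun p : ℝ × ℝ => c p.1 p.2) (Set.Ioo (0:ℝ) 1 ×ˢ Set.Ioo (0:ℝ) 1)
  bound : ∃ K₀₀ : ℝ, ∀ u v : ℝ, u ∈ Set.Ioo (0:ℝ) 1 → v ∈ Set.Ioo (0:ℝ) 1 →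
    c u v ≤ K₀₀ * min (1 / (u * (1 - u))) (1 / (v * (1 - v)))

/-- Assumption 1 of the paper, together with the i.i.d. sampling scheme and Sklar's relation:
`μ` is the common joint law of the i.i.d. pairs `(X i, Y i)`, `FX` and `FY` are the marginal
cdfs (strictly increasing on their supports), `μ` is absolutely continuous, and `C` is the
copula of the joint distribution. -/
structure SamplingHyp {Ω : Type*} [MeasurableSpace Ω] (P : Measure Ω)
    (X Y : ℕ → Ω → ℝ) (μ : Measure (ℝ × ℝ)) (FX FY : ℝ → ℝ) (C : ℝ → ℝ → ℝ) : Prop where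
  meas_X : ∀ i, Measurable (X i)
  meas_Y : ∀ i, Measurable (Y i)
  indep : iIndepFun (fun i ω => (X i ω, Y i ω)) P
  ident : ∀ i, Measure.map (fun ω => (X i ω, Y i ω)) P = μ
  prob : IsProbabilityMeasure μ
  absCont : μ ≪ (volume : Measure (ℝ × ℝ))
  FX_def : ∀ x, FX x = (μ (Set.Iic x ×ˢ Set.univ)).toReal
  FY_def : ∀ y, FY y = (μ (Set.univ ×ˢ Set.Iic y)).toReal
  FX_mono : StrictMonoOn FX {x | 0 < FX x ∧ FX x < 1}
  FY_mono : StrictMonoOn FY {y | 0 < FY y ∧ FY y < 1}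
  sklar : ∀ x y, (μ (Set.Iic x ×ˢ Set.Iic y)).toReal = C (FX x) (FY y)

/-- The empirical cdf of the first `n` observations of `Z`. -/
noncomputable def empCdf {Ω : Type*} (Z : ℕ → Ω → ℝ) (n : ℕ) (ω : Ω) (x : ℝ) : ℝ :=
  (n : ℝ)⁻¹ * ∑ j ∈ Finset.range n, if Z j ω ≤ x then (1:ℝ) else 0

/-- The probit-transformed pseudo-observation Ŝ_i = Φ⁻¹((n/(n+1)) F̂_n(Z_i)). -/
noncomputable def pseudoProbit {Ω : Type*} (Z : ℕ → Ω → ℝ) (n i : ℕ) (ω : Ω) : ℝ :=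
  probit ((n : ℝ) / ((n : ℝ) + 1) * empCdf Z n ω (Z i ω))

/-- The feasible kernel density estimator of f_ST based on the pseudo-observations. -/
noncomputable def fhatST {Ω : Type*} (X Y : ℕ → Ω → ℝ) (h : ℕ → ℝ) (n : ℕ)
    (s t : ℝ) (ω : Ω) : ℝ :=
  ((n : ℝ) * h n ^ 2)⁻¹ * ∑ i ∈ Finset.range n,
    gaussPdf ((s - pseudoProbit X n i ω) / h n) * gaussPdf ((t - pseudoProbit Y n i ω) / h n)

/-- The ideal kernel density estimator of f_ST based on the true uniformized observations. -/
noncomputable def fstarST {Ω : Type*} (FX FY : ℝ → ℝ) (X Y : ℕ → Ω → ℝ) (h : ℕ → ℝ) (n : ℕ)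
    (s t : ℝ) (ω : Ω) : ℝ :=
  ((n : ℝ) * h n ^ 2)⁻¹ * ∑ i ∈ Finset.range n,
    gaussPdf ((s - probit (FX (X i ω))) / h n) * gaussPdf ((t - probit (FY (Y i ω))) / h n)

/-- The naive probit-transformation kernel copula density estimator. -/
noncomputable def chatTau {Ω : Type*} (X Y : ℕ → Ω → ℝ) (h : ℕ → ℝ) (n : ℕ)
    (u v : ℝ) (ω : Ω) : ℝ :=
  fhatST X Y h n (probit u) (probit v) ω / (gaussPdf (probit u) * gaussPdf (probit v))

/-- Convergence in distribution of real random variables to the law `ν`: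
weak convergence of the laws tested against bounded continuous functions. -/
def TendstoInDistribution {Ω : Type*} [MeasurableSpace Ω] (P : Measure Ω)
    (Z : ℕ → Ω → ℝ) (ν : Measure ℝ) : Prop :=
  ∀ f : BoundedContinuousFunction ℝ ℝ,
    Filter.Tendsto (fun n => ∫ ω, f (Z n ω) ∂P) Filter.atTop (𝓝 (∫ x, f x ∂ν))

/-- The bandwidth condition: h_n ~ n^{-a} for some a ∈ (0, amax), i.e. n^a h_n → L > 0. -/
def BandwidthCond (h : ℕ → ℝ) (amax : ℝ) : Prop :=
  (∀ n, 0 < h n) ∧ ∃ a ∈ Set.Ioo (0:ℝ) amax, ∃ L > (0:ℝ),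
    Filter.Tendsto (fun n : ℕ => (n : ℝ) ^ a * h n) Filter.atTop (𝓝 L)

/-! Expand `G (t - h z)` to second order about `t`. Against `φ' = -z φ` the Taylor polynomial
integrates to exactly `h G'(t)`, since `∫ φ' = -∫ z φ = 0`, `∫ z φ' = -∫ z² φ = -1` and
`∫ z² φ' = -∫ z³ φ = 0`. The Lagrange remainder is at most `M h³ |z|³ / 6`, and
`∫ |z|³ |φ'(z)| dz = ∫ z⁴ φ = 3`. The even Gaussian moments come from the integration by parts
`∫ z^(n+2) φ = (n+1) ∫ z^n φ`. -/

open scoped Nat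

theorem abs_sub_sum_iteratedDeriv_le {f : ℝ → ℝ} {n : ℕ} (hf : ContDiff ℝ (n + 1) f) {M : ℝ}
    (hM : ∀ x, |iteratedDeriv (n + 1) f x| ≤ M) (x₀ x : ℝ) :
    |f x - ∑ k ∈ Finset.range (n + 1), iteratedDeriv k f x₀ / k ! * (x - x₀) ^ k|
      ≤ M * |x - x₀| ^ (n + 1) / (n + 1)! := by
  rcases eq_or_ne x₀ x with rfl | hx
  · simp [Finset.sum_range_succ']
  obtain ⟨x', -, hx'⟩ := taylor_mean_remainder_lagrange_iteratedDeriv hx hf.contDiffOn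
  have hpoly : taylorWithinEval f n (uIcc x₀ x) x₀ x =
      ∑ k ∈ Finset.range (n + 1), iteratedDeriv k f x₀ / k ! * (x - x₀) ^ k := by
    rw [taylor_within_apply]
    refine Finset.sum_congr rfl fun k hk => ?_
    rw [iteratedDerivWithin_eq_iteratedDeriv (uniqueDiffOn_uIcc hx)
      (hf.contDiffAt.of_le (by exact_mod_cast (Finset.mem_range.1 hk).le)) left_mem_uIcc,
      smul_eq_mul]
    ring
  rw [← hpoly, hx', abs_div, abs_mul, abs_pow, Nat.abs_cast]
  gcongr
  exact hM x'

theorem gaussPdf_eq_gaussianPDFReal : gaussPdf = gaussianPDFReal 0 1 := by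
  ext x
  rw [gaussianPDFReal_def]
  simp [gaussPdf]

theorem gaussPdf_neg (x : ℝ) : gaussPdf (-x) = gaussPdf x := by
  rw [gaussPdf, gaussPdf, neg_sq]

theorem hasDerivAt_gaussPdf (x : ℝ) : HasDerivAt gaussPdf (-(x * gaussPdf x)) x := by
  have hφ : gaussPdf = fun y => (√(2 * Real.pi))⁻¹ * Real.exp (-1 / 2 * y ^ 2) := by
    ext y; unfold gaussPdf; ring_nf
  rw [hφ]
  exact ((((hasDerivAt_pow 2 x).const_mul _).exp).const_mul _).congr_deriv (by push_cast; ring)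

theorem deriv_gaussPdf : deriv gaussPdf = fun x => -(x * gaussPdf x) :=
  funext fun x => (hasDerivAt_gaussPdf x).deriv

theorem integrable_pow_mul_gaussPdf (n : ℕ) : Integrable fun x : ℝ => x ^ n * gaussPdf x := by
  have := (integrable_rpow_mul_exp_neg_mul_sq (b := 1 / 2) (by norm_num)
    (s := n) (by linarith [(n.cast_nonneg : (0 : ℝ) ≤ n)])).const_mul (√(2 * Real.pi))⁻¹
  refine this.congr (.of_forall fun x => ?_)
  simp only [Real.rpow_natCast, gaussPdf]
  ring_nf

theorem integral_gaussPdf : ∫ x, gaussPdf x = 1 := by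
  rw [gaussPdf_eq_gaussianPDFReal, integral_gaussianPDFReal_eq_one 0 one_ne_zero]

theorem integral_odd_pow_mul_gaussPdf {n : ℕ} (hn : Odd n) : ∫ x, x ^ n * gaussPdf x = 0 := by
  have := integral_neg_eq_self (fun x : ℝ => x ^ n * gaussPdf x) volume
  simp only [hn.neg_pow, gaussPdf_neg, neg_mul, integral_neg] at this
  linarith

theorem integral_pow_add_two_mul_gaussPdf (n : ℕ) :
    ∫ x, x ^ (n + 2) * gaussPdf x = (n + 1) * ∫ x, x ^ n * gaussPdf x := by
  have hibp := integral_mul_deriv_eq_deriv_mul_of_integrable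
    (u := fun x : ℝ => x ^ (n + 1)) (u' := fun x => (n + 1) * x ^ n)
    (v := gaussPdf) (v' := fun x => -(x * gaussPdf x))
    (fun x _ => by simpa using hasDerivAt_pow (n + 1) x) (fun x _ => hasDerivAt_gaussPdf x)
    ((integrable_pow_mul_gaussPdf (n + 2)).neg.congr (.of_forall fun x => by simp; ring))
    (((integrable_pow_mul_gaussPdf n).const_mul (n + 1)).congr (.of_forall fun x => by simp; ring))
    (integrable_pow_mul_gaussPdf (n + 1))
  simp only [mul_neg, integral_neg, neg_inj, mul_assoc, integral_const_mul] at hibp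
  rw [← hibp]
  congr with x
  ring

theorem integral_sq_mul_gaussPdf : ∫ x, x ^ 2 * gaussPdf x = 1 := by
  simpa [integral_gaussPdf] using integral_pow_add_two_mul_gaussPdf 0

theorem integral_pow_four_mul_gaussPdf : ∫ x, x ^ 4 * gaussPdf x = 3 := by
  rw [integral_pow_add_two_mul_gaussPdf 2, integral_sq_mul_gaussPdf]
  norm_num

theorem integrable_pow_mul_deriv_gaussPdf (n : ℕ) :
    Integrable fun x : ℝ => x ^ n * deriv gaussPdf x := by
  simpa [deriv_gaussPdf, ← mul_assoc, ← pow_succ] using (integrable_pow_mul_gaussPdf (n + 1)).neg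

theorem integral_pow_mul_deriv_gaussPdf (n : ℕ) :
    ∫ x, x ^ n * deriv gaussPdf x = -∫ x, x ^ (n + 1) * gaussPdf x := by
  simp only [deriv_gaussPdf, mul_neg, integral_neg, ← mul_assoc, ← pow_succ]

theorem integrable_quadratic_mul_deriv_gaussPdf (a b c : ℝ) :
    Integrable fun x => (a + b * x + c * x ^ 2) * deriv gaussPdf x := by
  have hint := integrable_pow_mul_deriv_gaussPdf
  refine ((((hint 0).const_mul a).add ((hint 1).const_mul b)).add ((hint 2).const_mul c)).congr
    (.of_forall fun x => ?_)
  simp only [Pi.add_apply]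
  ring

theorem integral_quadratic_mul_deriv_gaussPdf (a b c : ℝ) :
    ∫ x, (a + b * x + c * x ^ 2) * deriv gaussPdf x = -b := by
  have hint := integrable_pow_mul_deriv_gaussPdf
  have hsplit : ∀ x, (a + b * x + c * x ^ 2) * deriv gaussPdf x =
      a * (x ^ 0 * deriv gaussPdf x) + b * (x ^ 1 * deriv gaussPdf x)
        + c * (x ^ 2 * deriv gaussPdf x) := fun x => by ring
  have hint01 : Integrable fun x : ℝ =>
      a * (x ^ 0 * deriv gaussPdf x) + b * (x ^ 1 * deriv gaussPdf x) :=
    ((hint 0).const_mul a).add ((hint 1).const_mul b)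
  simp only [hsplit]
  rw [integral_add hint01 ((hint 2).const_mul c),
    integral_add ((hint 0).const_mul a) ((hint 1).const_mul b), integral_const_mul,
    integral_const_mul, integral_const_mul, integral_pow_mul_deriv_gaussPdf,
    integral_pow_mul_deriv_gaussPdf, integral_pow_mul_deriv_gaussPdf]
  simp only [Nat.reduceAdd]
  rw [integral_odd_pow_mul_gaussPdf odd_one, integral_sq_mul_gaussPdf,
    integral_odd_pow_mul_gaussPdf (by decide)]
  ring

section CubicRemainder

variable {R : ℝ → ℝ} {C : ℝ}

theorem norm_mul_deriv_gaussPdf_le (hRC : ∀ x, |R x| ≤ C * |x| ^ 3) (x : ℝ) :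
    ‖R x * deriv gaussPdf x‖ ≤ C * (x ^ 4 * gaussPdf x) := by
  have hφ : 0 ≤ gaussPdf x := by rw [gaussPdf_eq_gaussianPDFReal]; exact gaussianPDFReal_nonneg ..
  calc ‖R x * deriv gaussPdf x‖ = |R x| * (|x| * gaussPdf x) := by
        rw [deriv_gaussPdf, Real.norm_eq_abs, abs_mul, abs_neg, abs_mul, abs_of_nonneg hφ]
    _ ≤ C * |x| ^ 3 * (|x| * gaussPdf x) := by gcongr; exact hRC x
    _ = C * (x ^ 4 * gaussPdf x) := by rw [← (by decide : Even 4).pow_abs]; ring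

theorem integrable_mul_deriv_gaussPdf_of_abs_le (hR : AEStronglyMeasurable R)
    (hRC : ∀ x, |R x| ≤ C * |x| ^ 3) : Integrable fun x => R x * deriv gaussPdf x :=
  ((integrable_pow_mul_gaussPdf 4).const_mul C).mono'
    (hR.mul (Continuous.aestronglyMeasurable (by rw [deriv_gaussPdf]; unfold gaussPdf; fun_prop)))
    (.of_forall (norm_mul_deriv_gaussPdf_le hRC))

theorem abs_integral_mul_deriv_gaussPdf_le (hRC : ∀ x, |R x| ≤ C * |x| ^ 3) :
    |∫ x, R x * deriv gaussPdf x| ≤ 3 * C := by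
  calc |∫ x, R x * deriv gaussPdf x| ≤ ∫ x, C * (x ^ 4 * gaussPdf x) :=
        norm_integral_le_of_norm_le ((integrable_pow_mul_gaussPdf 4).const_mul C)
          (.of_forall (norm_mul_deriv_gaussPdf_le hRC))
    _ = 3 * C := by rw [integral_const_mul, integral_pow_four_mul_gaussPdf, mul_comm]

end CubicRemainder

theorem taylor_bound_gaussian_derivative_general (G : ℝ → ℝ)
    (hG_smooth : ContDiff ℝ 3 G)
    (M : ℝ) (hM : ∀ x : ℝ, |iteratedDeriv 3 G x| ≤ M)
    (t : ℝ) (h : ℝ) (hh : 0 < h) :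
    |(∫ z : ℝ, G (t - h * z) * deriv gaussPdf z) - h * deriv G t| ≤ M * h ^ 3 / 2 := by
  set P : ℝ → ℝ := fun z => G t + -h * deriv G t * z + h ^ 2 * iteratedDeriv 2 G t / 2 * z ^ 2
  set R : ℝ → ℝ := fun z => G (t - h * z) - P z
  have hR_le : ∀ z, |R z| ≤ M * h ^ 3 / 6 * |z| ^ 3 := fun z => by
    have := abs_sub_sum_iteratedDeriv_le (n := 2) hG_smooth hM t (t - h * z)
    simp only [Finset.sum_range_succ, Finset.sum_range_zero, iteratedDeriv_zero,
      iteratedDeriv_one, sub_sub_cancel_left, abs_neg, abs_mul, abs_of_pos hh] at this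
    convert this using 2
    · simp only [R, P, Nat.factorial]; push_cast; ring
    · simp only [Nat.factorial]; push_cast; ring
  have hR_int : Integrable fun z => R z * deriv gaussPdf z :=
    integrable_mul_deriv_gaussPdf_of_abs_le
      (Continuous.aestronglyMeasurable (by have := hG_smooth.continuous; fun_prop)) hR_le
  have hP_int : Integrable fun z => P z * deriv gaussPdf z :=
    integrable_quadratic_mul_deriv_gaussPdf _ _ _
  have hsplit : ∫ z, G (t - h * z) * deriv gaussPdf z =
      (∫ z, P z * deriv gaussPdf z) + ∫ z, R z * deriv gaussPdf z := by
    rw [← integral_add hP_int hR_int]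
    congr with z
    ring
  have hP : ∫ z, P z * deriv gaussPdf z = h * deriv G t := by
    rw [integral_quadratic_mul_deriv_gaussPdf, neg_mul, neg_neg]
  rw [hsplit, hP, add_sub_cancel_left]
  linarith [abs_integral_mul_deriv_gaussPdf_le hR_le]

/-- Third-order Taylor bound against the odd Gaussian kernel derivative: for G bounded and
C³ with third derivative bounded by M, |∫ G(t−hz) φ′(z) dz − h G′(t)| ≤ M h³ / 2. -/
theorem taylor_bound_gaussian_derivative (G : ℝ → ℝ)
    (hG_bdd : ∃ B : ℝ, ∀ x : ℝ, |G x| ≤ B)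
    (hG_smooth : ContDiff ℝ 3 G)
    (M : ℝ) (hM : ∀ x : ℝ, |iteratedDeriv 3 G x| ≤ M)
    (t : ℝ) (h : ℝ) (hh : 0 < h) :
    |(∫ z : ℝ, G (t - h * z) * deriv gaussPdf z) - h * deriv G t| ≤ M * h ^ 3 / 2 :=
  taylor_bound_gaussian_derivative_general G hG_smooth M hM t h hh
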